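/- arXiv:2409.08814 — 3 statements merged into one kernel-verified Lean document; each statement's English description precedes it below -/
import Mathlib

section
/- Let F be a field with char F ≠ 2 and char F ≠ 3, let α₁,α₄,β₂ ∈ F, and let A = A₃(α₁,α₄,β₂) = [[α₁, 0, 0, α₄],[0, β₂, 1-α₁, 0]]. Then: (i) if α₄ ≠ 0, the invertible matrices g with gA = A(g⊗g) are exactly [[1,0],[0,±1]], and the only matrix D with DA = A(D⊗I₂ + I₂⊗D) is 0; (ii) if α₄ = 0 and β₂ ≠ 2α₁-1, the automorphism matrices are exactly [[1,0],[0,d]] with d ∈ F, d ≠ 0, and the derivation matrices are exactly [[0,0],[0,d]] with d ∈ F; (iii) if α₄ = 0 and β₂ = 2α₁-1, the automorphism matrices are exactly [[1,0],[c,d]] with c,d ∈ F, d ≠ 0, and the derivation matrices are exactly [[0,0],[c,d]] with c,d ∈ F. -/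
open Matrix Kronecker

/-- The matrix of structure constants (MSC) of a 2-dimensional algebra, as a
`2 × (2 × 2)` matrix: the column indexed by `(j,k)` corresponds to the product
`e_j · e_k`, so the columns in order `(0,0), (0,1), (1,0), (1,1)` carry the
entries `α₁ α₂ α₃ α₄` (first row) and `β₁ β₂ β₃ β₄` (second row). -/
def MSC {F : Type*} [Field F] (a1 a2 a3 a4 b1 b2 b3 b4 : F) :
    Matrix (Fin 2) (Fin 2 × Fin 2) F :=
  Matrix.of fun i j => !![a1, a2, a3, a4; b1, b2, b3, b4] i (finProdFinEquiv j)

/-- `g` is an automorphism matrix of the algebra with MSC `A`: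
`g` is invertible and `g • A = A • (g ⊗ g)`. -/
def IsAutoMat {F : Type*} [Field F] (A : Matrix (Fin 2) (Fin 2 × Fin 2) F)
    (g : Matrix (Fin 2) (Fin 2) F) : Prop :=
  IsUnit g ∧ g * A = A * (g ⊗ₖ g)

/-- `D` is a derivation matrix of the algebra with MSC `A`:
`D • A = A • (D ⊗ I + I ⊗ D)`. -/
def IsDerMat {F : Type*} [Field F] (A : Matrix (Fin 2) (Fin 2 × Fin 2) F)
    (D : Matrix (Fin 2) (Fin 2) F) : Prop :=
  D * A = A * (D ⊗ₖ (1 : Matrix (Fin 2) (Fin 2) F) + (1 : Matrix (Fin 2) (Fin 2) F) ⊗ₖ D)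

/-!
Comparing the entries of `g A = A (g ⊗ g)` in the columns of the products `e₁e₁, e₂e₁` (and of
`e₁e₂, e₂e₂`) and weighting them by the cofactors of `g`, the quadratic terms cancel and one is
left with `det g · (g₁₁ - 1) = 0` and `det g · g₁₂ = 0`. So every automorphism matrix is lower
triangular with first row `(1, 0)`; likewise the derivation equations force the first row of `D`
to vanish. For matrices of these shapes the remaining equations reduce to `α₄ c = 0`,
`α₄ d² = α₄` (resp. `2 α₄ d = 0`) and `(2 α₁ - 1 - β₂) c = 0`, from which the three cases are
read off.
-/

def A₃ {F : Type*} [Field F] (a1 a4 b2 : F) : Matrix (Fin 2) (Fin 2 × Fin 2) F :=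
  MSC a1 0 0 a4 0 b2 (1 - a1) 0

namespace A₃

variable {F : Type*} [Field F] {a1 a4 b2 : F}

lemma eq_of_mul_table : A₃ a1 a4 b2 =
    of fun i jk => ![![![a1, 0], ![0, a4]], ![![0, b2], ![1 - a1, 0]]] i jk.1 jk.2 := by
  ext i ⟨j, k⟩
  fin_cases i <;> fin_cases j <;> fin_cases k <;> rfl

lemma first_row_of_isAutoMat {g : Matrix (Fin 2) (Fin 2) F} (h : IsAutoMat (A₃ a1 a4 b2) g) :
    g 0 0 = 1 ∧ g 0 1 = 0 := by
  obtain ⟨hu, h⟩ := h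
  have hdet : g 0 0 * g 1 1 - g 0 1 * g 1 0 ≠ 0 := by
    simpa [isUnit_iff_isUnit_det, det_fin_two] using hu
  rw [← Matrix.ext_iff] at h
  simp only [Fin.forall_fin_two, Prod.forall, mul_apply, Fintype.sum_prod_type, Fin.sum_univ_two,
    eq_of_mul_table, kroneckerMap_apply, of_apply, cons_val_zero, cons_val_one] at h
  obtain ⟨⟨⟨E1, E2⟩, E3, E4⟩, ⟨E5, E6⟩, E7, E8⟩ := h
  have h00 : (g 0 0 * g 1 1 - g 0 1 * g 1 0) * (g 0 0 - 1) = 0 := by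
    linear_combination -(g 1 1 * E1) + g 1 0 * E3 + g 0 1 * E5 - g 0 0 * E7
  have h01 : (g 0 0 * g 1 1 - g 0 1 * g 1 0) * g 0 1 = 0 := by
    linear_combination -(g 1 1 * E2) + g 1 0 * E4 + g 0 1 * E6 - g 0 0 * E8
  exact ⟨sub_eq_zero.mp ((mul_eq_zero.mp h00).resolve_left hdet),
    (mul_eq_zero.mp h01).resolve_left hdet⟩

lemma isAutoMat_lower_iff (c d : F) :
    IsAutoMat (A₃ a1 a4 b2) !![1, 0; c, d] ↔
      d ≠ 0 ∧ a4 * c = 0 ∧ a4 * d ^ 2 = a4 ∧ (2 * a1 - 1 - b2) * c = 0 := by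
  have hu : IsUnit !![1, 0; c, d] ↔ d ≠ 0 := by simp [isUnit_iff_isUnit_det]
  rw [IsAutoMat, hu, and_congr_right_iff, ← Matrix.ext_iff]
  rintro -
  simp only [Fin.forall_fin_two, Prod.forall, mul_apply, Fintype.sum_prod_type, Fin.sum_univ_two,
    eq_of_mul_table, kroneckerMap_apply, of_apply, cons_val_zero, cons_val_one]
  constructor
  · rintro ⟨⟨-, -, E4⟩, ⟨E5, -⟩, -, E8⟩
    exact ⟨by linear_combination E8, by linear_combination -E4, by linear_combination E5⟩
  · rintro ⟨h1, h2, h3⟩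
    exact ⟨⟨⟨by linear_combination -c * h1, by linear_combination -d * h1⟩,
      by linear_combination -d * h1, by linear_combination -h2⟩,
      ⟨by linear_combination h3, by ring⟩, by ring, by linear_combination h1⟩

lemma isAutoMat_iff {g : Matrix (Fin 2) (Fin 2) F} :
    IsAutoMat (A₃ a1 a4 b2) g ↔ ∃ c d, g = !![1, 0; c, d] ∧
      d ≠ 0 ∧ a4 * c = 0 ∧ a4 * d ^ 2 = a4 ∧ (2 * a1 - 1 - b2) * c = 0 := by
  constructor
  · intro h
    obtain ⟨h00, h01⟩ := first_row_of_isAutoMat h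
    have hg : g = !![1, 0; g 1 0, g 1 1] := (eta_fin_two g).trans (by rw [h00, h01])
    exact ⟨_, _, hg, (isAutoMat_lower_iff _ _).1 (hg ▸ h)⟩
  · rintro ⟨c, d, rfl, h⟩
    exact (isAutoMat_lower_iff c d).2 h

lemma isAutoMat_iff_of_ne_zero (ha4 : a4 ≠ 0) {g : Matrix (Fin 2) (Fin 2) F} :
    IsAutoMat (A₃ a1 a4 b2) g ↔ g = !![1, 0; 0, 1] ∨ g = !![1, 0; 0, -1] := by
  rw [isAutoMat_iff]
  constructor
  · rintro ⟨c, d, rfl, -, hc, hd, -⟩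
    obtain rfl : c = 0 := (mul_eq_zero.1 hc).resolve_left ha4
    have hd1 : d ^ 2 = 1 := mul_left_cancel₀ ha4 (by rw [hd, mul_one])
    rcases sq_eq_one_iff.1 hd1 with rfl | rfl
    exacts [Or.inl rfl, Or.inr rfl]
  · rintro (rfl | rfl)
    exacts [⟨0, 1, rfl, one_ne_zero, by ring, by ring, by ring⟩,
      ⟨0, -1, rfl, neg_ne_zero.2 one_ne_zero, by ring, by ring, by ring⟩]

lemma isAutoMat_iff_of_ne (hb2 : b2 ≠ 2 * a1 - 1) {g : Matrix (Fin 2) (Fin 2) F} :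
    IsAutoMat (A₃ a1 0 b2) g ↔ ∃ d, d ≠ 0 ∧ g = !![1, 0; 0, d] := by
  have hb : 2 * a1 - 1 - b2 ≠ 0 := sub_ne_zero.2 hb2.symm
  rw [isAutoMat_iff]
  constructor
  · rintro ⟨c, d, rfl, hd, -, -, hc⟩
    obtain rfl : c = 0 := (mul_eq_zero.1 hc).resolve_left hb
    exact ⟨d, hd, rfl⟩
  · rintro ⟨d, hd, rfl⟩
    exact ⟨0, d, rfl, hd, by ring, by ring, by ring⟩

lemma isAutoMat_iff_of_eq {g : Matrix (Fin 2) (Fin 2) F} :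
    IsAutoMat (A₃ a1 0 (2 * a1 - 1)) g ↔ ∃ c d, d ≠ 0 ∧ g = !![1, 0; c, d] := by
  rw [isAutoMat_iff]
  constructor
  · rintro ⟨c, d, rfl, hd, -⟩
    exact ⟨c, d, hd, rfl⟩
  · rintro ⟨c, d, hd, rfl⟩
    exact ⟨c, d, rfl, hd, by ring, by ring, by ring⟩

lemma first_row_of_isDerMat {D : Matrix (Fin 2) (Fin 2) F} (h : IsDerMat (A₃ a1 a4 b2) D) :
    D 0 0 = 0 ∧ D 0 1 = 0 := by
  rw [IsDerMat, ← Matrix.ext_iff] at h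
  simp only [Fin.forall_fin_two, Prod.forall, mul_apply, Matrix.add_apply, Fintype.sum_prod_type,
    Fin.sum_univ_two, eq_of_mul_table, kroneckerMap_apply, of_apply, cons_val_zero, cons_val_one,
    one_fin_two] at h
  obtain ⟨⟨⟨E1, E2⟩, -, -⟩, -, E7, E8⟩ := h
  exact ⟨by linear_combination -E1 - E7, by linear_combination -E2 - E8⟩

lemma isDerMat_lower_iff (c d : F) :
    IsDerMat (A₃ a1 a4 b2) !![0, 0; c, d] ↔
      a4 * c = 0 ∧ 2 * a4 * d = 0 ∧ (2 * a1 - 1 - b2) * c = 0 := by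
  rw [IsDerMat, ← Matrix.ext_iff]
  simp only [Fin.forall_fin_two, Prod.forall, mul_apply, Matrix.add_apply, Fintype.sum_prod_type,
    Fin.sum_univ_two, eq_of_mul_table, kroneckerMap_apply, of_apply, cons_val_zero, cons_val_one,
    one_fin_two]
  constructor
  · rintro ⟨⟨-, -, E4⟩, ⟨E5, -⟩, -, E8⟩
    exact ⟨by linear_combination E8, by linear_combination -E4, by linear_combination E5⟩
  · rintro ⟨h1, h2, h3⟩
    exact ⟨⟨⟨by ring, by linear_combination -h1⟩, by linear_combination -h1,
      by linear_combination -h2⟩, ⟨by linear_combination h3, by ring⟩, by ring,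
      by linear_combination h1⟩

lemma isDerMat_iff {D : Matrix (Fin 2) (Fin 2) F} :
    IsDerMat (A₃ a1 a4 b2) D ↔ ∃ c d, D = !![0, 0; c, d] ∧
      a4 * c = 0 ∧ 2 * a4 * d = 0 ∧ (2 * a1 - 1 - b2) * c = 0 := by
  constructor
  · intro h
    obtain ⟨h00, h01⟩ := first_row_of_isDerMat h
    have hD : D = !![0, 0; D 1 0, D 1 1] := (eta_fin_two D).trans (by rw [h00, h01])
    exact ⟨_, _, hD, (isDerMat_lower_iff _ _).1 (hD ▸ h)⟩
  · rintro ⟨c, d, rfl, h⟩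
    exact (isDerMat_lower_iff c d).2 h

lemma isDerMat_iff_of_ne_zero (h2 : (2 : F) ≠ 0) (ha4 : a4 ≠ 0) {D : Matrix (Fin 2) (Fin 2) F} :
    IsDerMat (A₃ a1 a4 b2) D ↔ D = 0 := by
  rw [isDerMat_iff]
  constructor
  · rintro ⟨c, d, rfl, hc, hd, -⟩
    obtain rfl : c = 0 := (mul_eq_zero.1 hc).resolve_left ha4
    obtain rfl : d = 0 := (mul_eq_zero.1 hd).resolve_left (mul_ne_zero h2 ha4)
    exact (eta_fin_two 0).symm
  · rintro rfl
    exact ⟨0, 0, eta_fin_two 0, by ring, by ring, by ring⟩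

lemma isDerMat_iff_of_ne (hb2 : b2 ≠ 2 * a1 - 1) {D : Matrix (Fin 2) (Fin 2) F} :
    IsDerMat (A₃ a1 0 b2) D ↔ ∃ d, D = !![0, 0; 0, d] := by
  have hb : 2 * a1 - 1 - b2 ≠ 0 := sub_ne_zero.2 hb2.symm
  rw [isDerMat_iff]
  constructor
  · rintro ⟨c, d, rfl, -, -, hc⟩
    obtain rfl : c = 0 := (mul_eq_zero.1 hc).resolve_left hb
    exact ⟨d, rfl⟩
  · rintro ⟨d, rfl⟩
    exact ⟨0, d, rfl, by ring, by ring, by ring⟩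

lemma isDerMat_iff_of_eq {D : Matrix (Fin 2) (Fin 2) F} :
    IsDerMat (A₃ a1 0 (2 * a1 - 1)) D ↔ ∃ c d, D = !![0, 0; c, d] := by
  rw [isDerMat_iff]
  constructor
  · rintro ⟨c, d, rfl, -⟩
    exact ⟨c, d, rfl⟩
  · rintro ⟨c, d, rfl⟩
    exact ⟨c, d, rfl, by ring, by ring, by ring⟩

end A₃

theorem stmt_4_general {F : Type*} [Field F] (h2 : ringChar F ≠ 2)
    (a1 a4 b2 : F)
    (A : Matrix (Fin 2) (Fin 2 × Fin 2) F)
    (hA : A = MSC a1 0 0 a4 0 b2 (1 - a1) 0) :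
    (a4 ≠ 0 →
      (∀ g : Matrix (Fin 2) (Fin 2) F,
        IsAutoMat A g ↔ g = !![1, 0; 0, 1] ∨ g = !![1, 0; 0, -1]) ∧
      (∀ D : Matrix (Fin 2) (Fin 2) F, IsDerMat A D ↔ D = 0)) ∧
    (a4 = 0 → b2 ≠ 2 * a1 - 1 →
      (∀ g : Matrix (Fin 2) (Fin 2) F,
        IsAutoMat A g ↔ ∃ d : F, d ≠ 0 ∧ g = !![1, 0; 0, d]) ∧
      (∀ D : Matrix (Fin 2) (Fin 2) F,
        IsDerMat A D ↔ ∃ d : F, D = !![0, 0; 0, d])) ∧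
    (a4 = 0 → b2 = 2 * a1 - 1 →
      (∀ g : Matrix (Fin 2) (Fin 2) F,
        IsAutoMat A g ↔ ∃ c d : F, d ≠ 0 ∧ g = !![1, 0; c, d]) ∧
      (∀ D : Matrix (Fin 2) (Fin 2) F,
        IsDerMat A D ↔ ∃ c d : F, D = !![0, 0; c, d])) := by
  obtain rfl : A = A₃ a1 a4 b2 := hA
  refine ⟨fun ha4 => ⟨fun g => A₃.isAutoMat_iff_of_ne_zero ha4,
    fun D => A₃.isDerMat_iff_of_ne_zero (Ring.two_ne_zero h2) ha4⟩, ?_, ?_⟩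
  · rintro rfl hb2
    exact ⟨fun g => A₃.isAutoMat_iff_of_ne hb2, fun D => A₃.isDerMat_iff_of_ne hb2⟩
  · rintro rfl rfl
    exact ⟨fun g => A₃.isAutoMat_iff_of_eq, fun D => A₃.isDerMat_iff_of_eq⟩

theorem stmt_4 {F : Type*} [Field F] (h2 : ringChar F ≠ 2) (h3 : ringChar F ≠ 3)
    (a1 a4 b2 : F)
    (A : Matrix (Fin 2) (Fin 2 × Fin 2) F)
    (hA : A = MSC a1 0 0 a4 0 b2 (1 - a1) 0) :
    (a4 ≠ 0 →
      (∀ g : Matrix (Fin 2) (Fin 2) F,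
        IsAutoMat A g ↔ g = !![1, 0; 0, 1] ∨ g = !![1, 0; 0, -1]) ∧
      (∀ D : Matrix (Fin 2) (Fin 2) F, IsDerMat A D ↔ D = 0)) ∧
    (a4 = 0 → b2 ≠ 2 * a1 - 1 →
      (∀ g : Matrix (Fin 2) (Fin 2) F,
        IsAutoMat A g ↔ ∃ d : F, d ≠ 0 ∧ g = !![1, 0; 0, d]) ∧
      (∀ D : Matrix (Fin 2) (Fin 2) F,
        IsDerMat A D ↔ ∃ d : F, D = !![0, 0; 0, d])) ∧
    (a4 = 0 → b2 = 2 * a1 - 1 →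
      (∀ g : Matrix (Fin 2) (Fin 2) F,
        IsAutoMat A g ↔ ∃ c d : F, d ≠ 0 ∧ g = !![1, 0; c, d]) ∧
      (∀ D : Matrix (Fin 2) (Fin 2) F,
        IsDerMat A D ↔ ∃ c d : F, D = !![0, 0; c, d])) :=
  stmt_4_general h2 a1 a4 b2 A hA
end

section
/- Let F be a field with char F ≠ 2 and char F ≠ 3, let β₁ ∈ F, and let A = A₈(β₁) = [[0, 1, 1, 0],[β₁, 1, 0, -1]]. Then the only invertible 2×2 matrix g over F with gA = A(g⊗g) is the identity matrix, and the only 2×2 matrix D with DA = A(D⊗I₂ + I₂⊗D) is the zero matrix. -/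
/-!
In the basis `e₁, e₂` the algebra `A₈(β₁)` has `e₁e₁ = β₁e₂`, `e₁e₂ = e₁ + e₂`, `e₂e₁ = e₁` and
`e₂e₂ = -e₂`. Comparing the columns `(0,1)` and `(1,0)` of the two sides of `gA = A(g ⊗ g)`
forces `g₀₁ = 0`; then `g₁₁` is a nonzero idempotent, hence `1`, after which the remaining entries
are pinned down by linear equations with coefficient `2`. Linearising the same equations gives
`D = 0`, now dividing by `2` and by `3`.
-/

open Matrix Kronecker

theorem natCast_ne_zero_of_ringChar_ne {R : Type*} [NonAssocSemiring R] [Nontrivial R] {p : ℕ}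
    (hp : p.Prime) (h : ringChar R ≠ p) : (p : R) ≠ 0 := fun h0 =>
  (hp.eq_one_or_self_of_dvd _ (ringChar.dvd h0)).elim CharP.ringChar_ne_one h

section A8

variable {F : Type*} [Field F] {b : F}

theorem eq_one_of_isUnit_of_mul_MSC_eq (h2 : (2 : F) ≠ 0) {g : Matrix (Fin 2) (Fin 2) F}
    (hu : IsUnit g)
    (hg : g * MSC 0 1 1 0 b 1 0 (-1) = MSC 0 1 1 0 b 1 0 (-1) * (g ⊗ₖ g)) : g = 1 := by
  have e := fun i j k => congr_fun (congr_fun hg i) (j, k)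
  simp only [Matrix.mul_apply, Fintype.sum_prod_type, Fin.sum_univ_two, MSC, finProdFinEquiv,
    Fin.forall_fin_two, kroneckerMap_apply, of_apply, Equiv.coe_fn_mk] at e
  norm_num at e
  obtain ⟨⟨⟨-, e01⟩, e10, -⟩, ⟨-, f01⟩, f10, f11⟩ := e
  have hdet : g 0 0 * g 1 1 - g 0 1 * g 1 0 ≠ 0 := by
    simpa [det_fin_two] using (isUnit_iff_isUnit_det g).mp hu
  have hb : g 0 1 = 0 := by linear_combination e01 - e10
  have hd : g 1 1 = 1 := by
    have hidem : g 1 1 * (g 1 1 - 1) = 0 := by linear_combination f11 + (b * g 0 1 + g 1 1) * hb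
    refine sub_eq_zero.mp ((mul_eq_zero.mp hidem).resolve_left fun h0 => hdet ?_)
    rw [h0, hb]; ring
  have hc : g 1 0 = 0 := by
    refine (mul_eq_zero.mp (?_ : 2 * g 1 0 = 0)).resolve_left h2
    linear_combination f10 + (b * g 0 0 + g 1 0) * hb - g 1 0 * hd
  have ha : g 0 0 = 1 := by
    linear_combination -f01 - b * g 0 0 * hb + (1 + g 1 1) * hc + (1 - g 0 0) * hd
  rw [eta_fin_two g, ha, hb, hc, hd, one_fin_two]

theorem eq_zero_of_mul_MSC_eq (h2 : (2 : F) ≠ 0) (h3 : (3 : F) ≠ 0)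
    {D : Matrix (Fin 2) (Fin 2) F}
    (hD : D * MSC 0 1 1 0 b 1 0 (-1) = MSC 0 1 1 0 b 1 0 (-1) * (D ⊗ₖ 1 + 1 ⊗ₖ D)) : D = 0 := by
  have e := fun i j k => congr_fun (congr_fun hD i) (j, k)
  simp only [Matrix.mul_apply, Matrix.add_apply, Fintype.sum_prod_type, Fin.sum_univ_two, MSC,
    finProdFinEquiv, Fin.forall_fin_two, kroneckerMap_apply, of_apply, Equiv.coe_fn_mk,
    one_apply] at e
  norm_num at e
  obtain ⟨⟨⟨e00, -⟩, hd, e11⟩, ⟨-, f01⟩, -, -⟩ := e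
  have hb : D 0 1 = 0 :=
    (mul_eq_zero.mp (by linear_combination -e11 : 3 * D 0 1 = 0)).resolve_left h3
  have hc : D 1 0 = 0 :=
    (mul_eq_zero.mp (by linear_combination -e00 + b * hb : 2 * D 1 0 = 0)).resolve_left h2
  have ha : D 0 0 = 0 := by linear_combination -f01 - b * hb + 2 * hc
  rw [eta_fin_two D, ha, hb, hc, hd]
  exact (eta_fin_two 0).symm

end A8

theorem stmt_9 {F : Type*} [Field F] (h2 : ringChar F ≠ 2) (h3 : ringChar F ≠ 3)
    (b1 : F)
    (A : Matrix (Fin 2) (Fin 2 × Fin 2) F)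
    (hA : A = MSC 0 1 1 0 b1 1 0 (-1)) :
    (∀ g : Matrix (Fin 2) (Fin 2) F, IsAutoMat A g ↔ g = 1) ∧
    (∀ D : Matrix (Fin 2) (Fin 2) F, IsDerMat A D ↔ D = 0) := by
  have h2' : (2 : F) ≠ 0 := Ring.two_ne_zero h2
  have h3' : (3 : F) ≠ 0 := by exact_mod_cast natCast_ne_zero_of_ringChar_ne Nat.prime_three h3
  subst hA
  refine ⟨fun g => ⟨fun ⟨hu, hg⟩ => eq_one_of_isUnit_of_mul_MSC_eq h2' hu hg, ?_⟩,
    fun D => ⟨eq_zero_of_mul_MSC_eq h2' h3', ?_⟩⟩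
  · rintro rfl
    exact ⟨isUnit_one, by rw [one_kronecker_one, Matrix.one_mul, Matrix.mul_one]⟩
  · rintro rfl
    simp [IsDerMat]
end

section
/- Let F be a field with char F = 2, let α₁,β₁,β₂ ∈ F, and let A = A_{4,2}(α₁,β₁,β₂) = [[α₁, 1, 1, 0],[β₁, β₂, 1+α₁, 1]]. Then the invertible 2×2 matrices g over F with gA = A(g⊗g) are exactly the two matrices I₂ and [[1,0],[1+β₂,1]]; moreover, if β₂ ≠ 1 the only 2×2 matrix D with DA = A(D⊗I₂ + I₂⊗D) is 0, and if β₂ = 1 the matrices D with DA = A(D⊗I₂ + I₂⊗D) are exactly [[0,0],[c,0]] with c ∈ F. -/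
/-! In characteristic 2 the trace of right multiplication by `x = u e₁ + v e₂` in `A_{4,2}` is
just `u`. Automorphisms preserve the linear form `x ↦ tr R_x` and derivations annihilate it, so
the first row of an automorphism matrix is `(1, 0)` and that of a derivation matrix is `0`. Two of
the remaining structure equations then pin down the second row. -/

open Matrix Kronecker

namespace Matrix

variable {ι R : Type*} [CommRing R]

/-- Column `(j, k)` of an MSC holds the coordinates of `e_j e_k`, so this is the matrix of
right multiplication by `e_k`. -/
def rightMul (A : Matrix ι (ι × ι) R) (k : ι) : Matrix ι ι R := of fun i j => A i (j, k)

theorem rightMul_add (A B : Matrix ι (ι × ι) R) (k : ι) :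
    rightMul (A + B) k = rightMul A k + rightMul B k := rfl

variable [Fintype ι]

def rightMulTrace (A : Matrix ι (ι × ι) R) (k : ι) : R := (rightMul A k).trace

theorem rightMul_mul (g : Matrix ι ι R) (A : Matrix ι (ι × ι) R) (k : ι) :
    rightMul (g * A) k = g * rightMul A k := rfl

theorem rightMul_mul_kronecker (A : Matrix ι (ι × ι) R) (g h : Matrix ι ι R) (n : ι) :
    rightMul (A * (g ⊗ₖ h)) n = (∑ k, h k n • rightMul A k) * g := by
  ext i j
  simp only [rightMul, of_apply, mul_apply, Fintype.sum_prod_type, kroneckerMap_apply, sum_apply,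
    smul_apply, smul_eq_mul, Finset.sum_mul]
  exact Finset.sum_congr rfl fun m _ => Finset.sum_congr rfl fun k _ => by ring

variable [DecidableEq ι]

/-- An automorphism `g` conjugates right multiplication by `e_n` into right multiplication by
`g e_n`, so it preserves the linear form `x ↦ trace (R_x)`. -/
theorem rightMulTrace_vecMul_of_mul_eq_mul_kronecker {A : Matrix ι (ι × ι) R}
    {g : Matrix ι ι R} (hg : IsUnit g) (h : g * A = A * (g ⊗ₖ g)) :
    rightMulTrace A ᵥ* g = rightMulTrace A := by
  funext n
  have hconj : g * rightMul A n * g⁻¹ = ∑ k, g k n • rightMul A k := by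
    rw [← rightMul_mul, h, rightMul_mul_kronecker,
      mul_nonsing_inv_cancel_right _ _ ((isUnit_iff_isUnit_det g).mp hg)]
  have htrace := congrArg trace hconj
  rw [trace_conj hg, trace_sum] at htrace
  simp only [trace_smul, smul_eq_mul] at htrace
  simp only [vecMul, dotProduct, rightMulTrace, htrace, mul_comm]

/-- A derivation `D` satisfies `[D, R_{e_n}] = R_{D e_n}`, and commutators are traceless. -/
theorem rightMulTrace_vecMul_eq_zero_of_mul_eq_mul_kronecker_add {A : Matrix ι (ι × ι) R}
    {D : Matrix ι ι R} (h : D * A = A * (D ⊗ₖ 1 + 1 ⊗ₖ D)) : rightMulTrace A ᵥ* D = 0 := by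
  funext n
  have hcomm : D * rightMul A n = rightMul A n * D + ∑ k, D k n • rightMul A k := by
    rw [← rightMul_mul, h, Matrix.mul_add, rightMul_add, rightMul_mul_kronecker,
      rightMul_mul_kronecker, Matrix.mul_one]
    simp [one_apply]
  have htrace := congrArg trace hcomm
  rw [trace_add, trace_mul_comm, trace_sum, left_eq_add] at htrace
  simpa only [trace_smul, smul_eq_mul, vecMul, dotProduct, rightMulTrace, mul_comm,
    Pi.zero_apply] using htrace

end Matrix

open Matrix

section

variable {F : Type*} [Field F]

theorem MSC_apply (a1 a2 a3 a4 b1 b2 b3 b4 : F) (i j k : Fin 2) :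
    MSC a1 a2 a3 a4 b1 b2 b3 b4 i (j, k) = ![!![a1, a2; a3, a4], !![b1, b2; b3, b4]] i j k := by
  fin_cases i <;> fin_cases j <;> fin_cases k <;> rfl

theorem rightMulTrace_MSC (a1 a2 a3 a4 b1 b2 b3 b4 : F) :
    rightMulTrace (MSC a1 a2 a3 a4 b1 b2 b3 b4) = ![a1 + b3, a2 + b4] := by
  ext k
  fin_cases k <;> simp [rightMulTrace, rightMul, trace_fin_two, MSC_apply]

variable (a1 b1 b2 : F)

abbrev A42 : Matrix (Fin 2) (Fin 2 × Fin 2) F := MSC a1 1 1 0 b1 b2 (1 + a1) 1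

variable [CharP F 2]

theorem rightMulTrace_A42 : rightMulTrace (A42 a1 b1 b2) = ![1, 0] := by
  rw [rightMulTrace_MSC, add_left_comm, CharTwo.add_self_eq_zero, add_zero,
    CharTwo.add_self_eq_zero]

theorem first_row_eq_of_isAutoMat_A42 {g : Matrix (Fin 2) (Fin 2) F}
    (hg : IsAutoMat (A42 a1 b1 b2) g) : g 0 = ![1, 0] := by
  have h := rightMulTrace_vecMul_of_mul_eq_mul_kronecker hg.1 hg.2
  rw [rightMulTrace_A42] at h
  rw [← h]
  ext j
  simp [vecMul, dotProduct, Fin.sum_univ_two]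

theorem first_row_eq_zero_of_isDerMat_A42 {D : Matrix (Fin 2) (Fin 2) F}
    (hD : IsDerMat (A42 a1 b1 b2) D) : D 0 = 0 := by
  have h := rightMulTrace_vecMul_eq_zero_of_mul_eq_mul_kronecker_add hD
  rw [rightMulTrace_A42] at h
  rw [← h]
  ext j
  simp [vecMul, dotProduct, Fin.sum_univ_two]

theorem mul_A42_eq_A42_mul_kronecker_iff (r s : F) :
    !![1, 0; r, s] * A42 a1 b1 b2 = A42 a1 b1 b2 * (!![1, 0; r, s] ⊗ₖ !![1, 0; r, s]) ↔
      s = 1 ∧ r * (r - (1 + b2)) = 0 := by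
  constructor
  · intro h
    have hs : 1 = s := by
      simpa [MSC_apply, mul_apply, Fin.sum_univ_two, Fintype.sum_prod_type] using
        congrFun₂ h 0 (0, 1)
    subst hs
    have hr : r * a1 + b1 = b1 + b2 * r + ((1 + a1) * r + r * r) := by
      simpa [MSC_apply, mul_apply, Fin.sum_univ_two, Fintype.sum_prod_type] using
        congrFun₂ h 1 (0, 0)
    exact ⟨rfl, by grind⟩
  · rintro ⟨rfl, hr⟩
    ext i ⟨j, k⟩
    fin_cases i <;> fin_cases j <;> fin_cases k <;>
      simp [MSC_apply, mul_apply, Fin.sum_univ_two, Fintype.sum_prod_type] <;> grind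

theorem isDerMat_A42_iff_of_first_row_zero (c d : F) :
    IsDerMat (A42 a1 b1 b2) !![0, 0; c, d] ↔ d = 0 ∧ c * (b2 - 1) = 0 := by
  constructor
  · intro h
    have hd : 0 = d := by
      simpa [MSC_apply, mul_apply, Fin.sum_univ_two, Fintype.sum_prod_type, one_apply] using
        congrFun₂ h 0 (1, 0)
    subst hd
    have hc : c * a1 = b2 * c + (1 + a1) * c := by
      simpa [MSC_apply, mul_apply, Fin.sum_univ_two, Fintype.sum_prod_type, one_apply] using
        congrFun₂ h 1 (0, 0)
    exact ⟨rfl, by grind⟩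
  · rintro ⟨rfl, hc⟩
    ext i ⟨j, k⟩
    fin_cases i <;> fin_cases j <;> fin_cases k <;>
      simp [MSC_apply, mul_apply, Fin.sum_univ_two, Fintype.sum_prod_type, one_apply] <;> grind

theorem isAutoMat_A42_iff (g : Matrix (Fin 2) (Fin 2) F) :
    IsAutoMat (A42 a1 b1 b2) g ↔ g = 1 ∨ g = !![1, 0; 1 + b2, 1] := by
  constructor
  · intro hg
    have hrow := first_row_eq_of_isAutoMat_A42 a1 b1 b2 hg
    obtain ⟨r, s, rfl⟩ : ∃ r s, g = !![1, 0; r, s] :=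
      ⟨g 1 0, g 1 1, by rw [eta_fin_two g, hrow]; rfl⟩
    obtain ⟨rfl, hr⟩ := (mul_A42_eq_A42_mul_kronecker_iff a1 b1 b2 r s).mp hg.2
    rcases mul_eq_zero.mp hr with rfl | hr
    · exact Or.inl one_fin_two.symm
    · rw [sub_eq_zero.mp hr]
      exact Or.inr rfl
  · intro hg
    obtain ⟨r, hr, rfl⟩ : ∃ r, r * (r - (1 + b2)) = 0 ∧ g = !![1, 0; r, 1] := by
      rcases hg with rfl | rfl
      · exact ⟨0, zero_mul _, one_fin_two⟩
      · exact ⟨1 + b2, by rw [sub_self, mul_zero], rfl⟩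
    exact ⟨by simp [isUnit_iff_isUnit_det, det_fin_two_of],
      (mul_A42_eq_A42_mul_kronecker_iff a1 b1 b2 r 1).mpr ⟨rfl, hr⟩⟩

theorem isDerMat_A42_iff (D : Matrix (Fin 2) (Fin 2) F) :
    IsDerMat (A42 a1 b1 b2) D ↔ ∃ c, D = !![0, 0; c, 0] ∧ c * (b2 - 1) = 0 := by
  constructor
  · intro hD
    have hrow := first_row_eq_zero_of_isDerMat_A42 a1 b1 b2 hD
    obtain ⟨c, d, rfl⟩ : ∃ c d, D = !![0, 0; c, d] :=
      ⟨D 1 0, D 1 1, by rw [eta_fin_two D, hrow]; rfl⟩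
    obtain ⟨rfl, hc⟩ := (isDerMat_A42_iff_of_first_row_zero a1 b1 b2 c d).mp hD
    exact ⟨c, rfl, hc⟩
  · rintro ⟨c, rfl, hc⟩
    exact (isDerMat_A42_iff_of_first_row_zero a1 b1 b2 c 0).mpr ⟨rfl, hc⟩

end

theorem stmt_16 {F : Type*} [Field F] (hch : ringChar F = 2)
    (a1 b1 b2 : F)
    (A : Matrix (Fin 2) (Fin 2 × Fin 2) F)
    (hA : A = MSC a1 1 1 0 b1 b2 (1 + a1) 1) :
    (∀ g : Matrix (Fin 2) (Fin 2) F,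
      IsAutoMat A g ↔ g = 1 ∨ g = !![1, 0; 1 + b2, 1]) ∧
    (b2 ≠ 1 → ∀ D : Matrix (Fin 2) (Fin 2) F, IsDerMat A D ↔ D = 0) ∧
    (b2 = 1 → ∀ D : Matrix (Fin 2) (Fin 2) F,
      IsDerMat A D ↔ ∃ c : F, D = !![0, 0; c, 0]) := by
  have := ringChar.of_eq hch
  subst hA
  refine ⟨isAutoMat_A42_iff a1 b1 b2, fun hb2 D => ?_, fun hb2 D => ?_⟩
  · rw [isDerMat_A42_iff]
    simp only [mul_eq_zero, sub_ne_zero.mpr hb2, or_false, exists_eq_right]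
    rw [show !![0, 0; 0, 0] = (0 : Matrix (Fin 2) (Fin 2) F) from (eta_fin_two 0).symm]
  · simp [isDerMat_A42_iff, hb2]
end
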